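/- arXiv:2004.09008 — 8 statements merged into one kernel-verified Lean document; each statement's English description precedes it below -/
import Mathlib

section
/- Let d ≥ 3 and k ≥ 2 be integers. The Klein polynomial of type K_k, namely F(x₁,…,x_k) = x₁^{d-1}x₂ + x₂^{d-1}x₃ + ⋯ + x_{k-1}^{d-1}x_k + x_k^{d-1}x₁ over ℂ, is smooth: the only common zero in ℂ^k of all its partial derivatives is the origin. -/
/-!
At a common zero `x` of the partial derivatives of `∑ᵢ xᵢⁿ x_{σ i}` (here `n = d - 1` and `σ` is
the cyclic shift) one has `xᵢⁿ = -n x_{σ i}ⁿ⁻¹ x_{σ² i}`. Hence the set `N` of nonzero coordinates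
is `σ`-stable, and multiplying these equations over `N` gives `Pⁿ = (-n)^|N| Pⁿ` for the nonzero
product `P = ∏_{i ∈ N} xᵢ`. So `(-n)^|N| = 1`, which forces `N = ∅` as `n ≥ 2`.
-/

open MvPolynomial

theorem Finset.prod_comp_perm_of_mapsTo {ι M : Type*} [CommMonoid M] (σ : Equiv.Perm ι)
    (s : Finset ι) (hs : ∀ i ∈ s, σ i ∈ s) (f : ι → M) :
    ∏ i ∈ s, f (σ i) = ∏ i ∈ s, f i := by
  have hσs : s.map σ.toEmbedding = s := Finset.map_eq_of_subset fun _ hi => by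
    obtain ⟨j, hj, rfl⟩ := Finset.mem_map.mp hi
    exact hs j hj
  calc ∏ i ∈ s, f (σ i) = ∏ i ∈ s.map σ.toEmbedding, f i := by rw [Finset.prod_map]; rfl
    _ = ∏ i ∈ s, f i := by rw [hσs]

theorem eq_zero_of_forall_pow_add_mul_pow_mul_perm_eq_zero {ι R : Type*} [Fintype ι]
    [CommRing R] [IsDomain R] [CharZero R] (σ : Equiv.Perm ι) {n : ℕ} (hn : 2 ≤ n) (x : ι → R)
    (h : ∀ i, x i ^ n + n * x (σ i) ^ (n - 1) * x (σ (σ i)) = 0) : x = 0 := by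
  classical
  have hx : ∀ i, x i ^ n = -n * x (σ i) ^ (n - 1) * x (σ (σ i)) := fun i => by
    linear_combination h i
  have hmaps : ∀ i, x i ≠ 0 → x (σ i) ≠ 0 := fun i hi h0 => by
    simpa [hx, h0, zero_pow (show n - 1 ≠ 0 by omega)] using pow_ne_zero n hi
  set N := Finset.univ.filter (x · ≠ 0)
  have hN : ∀ i ∈ N, σ i ∈ N := by simpa [N] using hmaps
  set P := ∏ i ∈ N, x i
  have hP : P ^ n ≠ 0 := pow_ne_zero _ (Finset.prod_ne_zero_iff.mpr (by simp [N]))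
  have hPP : P ^ n = (-n : R) ^ N.card * P ^ n := calc
    P ^ n = ∏ i ∈ N, -n * x (σ i) ^ (n - 1) * x (σ (σ i)) := by
      rw [← Finset.prod_pow]
      exact Finset.prod_congr rfl fun i _ => hx i
    _ = (-n : R) ^ N.card * P ^ (n - 1) * P := by
      rw [Finset.prod_mul_distrib, Finset.prod_mul_distrib, Finset.prod_const, Finset.prod_pow,
        Finset.prod_comp_perm_of_mapsTo σ N hN,
        Finset.prod_comp_perm_of_mapsTo σ N hN (fun i => x (σ i)),
        Finset.prod_comp_perm_of_mapsTo σ N hN]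
    _ = (-n : R) ^ N.card * P ^ n := by rw [mul_assoc, ← pow_succ, Nat.sub_add_cancel (by omega)]
  have hneg : (-n : ℤ) ^ N.card = 1 := by
    refine Int.cast_injective (α := R) ?_
    push_cast
    exact mul_right_cancel₀ hP (hPP.symm.trans (one_mul _).symm)
  have hcard : N.card = 0 := by
    rcases pow_eq_one_iff_cases.mp hneg with h | h | ⟨h, -⟩ <;> omega
  funext i
  by_contra hi
  exact Finset.card_ne_zero.mpr ⟨i, by simpa [N] using hi⟩ hcard

namespace MvPolynomial

variable {ι R : Type*} [Fintype ι]

noncomputable def kleinPoly [CommSemiring R] (σ : Equiv.Perm ι) (n : ℕ) : MvPolynomial ι R :=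
  ∑ i, X i ^ n * X (σ i)

theorem pderiv_kleinPoly [CommSemiring R] (σ : Equiv.Perm ι) (n : ℕ) (j : ι) :
    pderiv j (kleinPoly σ n : MvPolynomial ι R) =
      X (σ.symm j) ^ n + (n : MvPolynomial ι R) * X j ^ (n - 1) * X (σ j) := by
  classical
  simp only [kleinPoly, map_sum, pderiv_mul, pderiv_pow, pderiv_X, Pi.single_apply,
    Finset.sum_add_distrib, ← Equiv.eq_symm_apply]
  simp [add_comm]

theorem eq_zero_of_forall_eval_pderiv_kleinPoly_eq_zero [CommRing R] [IsDomain R] [CharZero R]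
    (σ : Equiv.Perm ι) {n : ℕ} (hn : 2 ≤ n) (x : ι → R)
    (hx : ∀ j, eval x (pderiv j (kleinPoly σ n : MvPolynomial ι R)) = 0) : x = 0 :=
  eq_zero_of_forall_pow_add_mul_pow_mul_perm_eq_zero σ hn x fun i => by
    simpa [pderiv_kleinPoly] using hx (σ i)

end MvPolynomial

/-- The Klein polynomial of type `K_k`:
`x₁^{d-1}x₂ + x₂^{d-1}x₃ + ⋯ + x_k^{d-1}x₁` (indices cyclic mod `k`) is smooth. -/
theorem stmt_3 (d k : ℕ) (hd : 3 ≤ d) (hk : 2 ≤ k)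
    (F : MvPolynomial (Fin k) ℂ)
    (hF : F = ∑ i : Fin k,
      X i ^ (d - 1) * X (⟨(i.val + 1) % k, Nat.mod_lt _ (by omega)⟩ : Fin k)) :
    ∀ x : Fin k → ℂ, (∀ i : Fin k, eval x (pderiv i F) = 0) → x = 0 := by
  have : NeZero k := ⟨by omega⟩
  have hF_klein : F = kleinPoly (finRotate k) (d - 1) := by
    rw [hF, kleinPoly]
    congr! with i
    simp [finRotate_apply, Fin.val_add]
  subst hF_klein
  exact eq_zero_of_forall_eval_pderiv_kleinPoly_eq_zero _ (by omega)
end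

section
/- Let d ≥ 3, k ≥ 2 be integers and let i : {1,…,k} → {1,…,k} be a function. If there exist indices a < b with i(a) = i(b) and i(a) ∉ {a, b}, then the polynomial F(x₁,…,x_k) = Σ_{a=1}^{k} x_a^{d-1} x_{i(a)} over ℂ is not smooth; explicitly, all partial derivatives of F vanish at a nonzero point of ℂ^k. -/
open MvPolynomial

/-!
At a point supported on `{a, b}` with `x (i a) = 0`, the only partial derivative of
`F = ∑ c, x_c ^ n * x_{i c}` that can survive is the one in the direction `i a`, where it equals
`x_a ^ n + x_b ^ n` (the terms `n x_j ^ (n - 1) x_{i j}` vanish because `n ≥ 2`). Choosing `x_a = 1` and `x_b` an `n`-th root of `-1` kills it as well.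
-/

section

variable {R σ : Type*} [CommSemiring R] [DecidableEq σ]

theorem eval_pderiv_X_pow_mul_X (n : ℕ) (x : σ → R) (c c' j : σ) :
    eval x (pderiv j (X c ^ n * X c')) =
      (if c = j then n * x c ^ (n - 1) * x c' else 0) + (if c' = j then x c ^ n else 0) := by
  simp only [pderiv_mul, pderiv_pow, pderiv_X, Pi.single_apply]
  split_ifs <;> simp

variable [Fintype σ]

theorem eval_pderiv_sum_X_pow_mul_X (i : σ → σ) (n : ℕ) (x : σ → R) (j : σ) :
    eval x (pderiv j (∑ c, X c ^ n * X (i c))) =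
      n * x j ^ (n - 1) * x (i j) + ∑ c with i c = j, x c ^ n := by
  simp only [map_sum, eval_pderiv_X_pow_mul_X, Finset.sum_add_distrib, Finset.sum_ite_eq',
    Finset.mem_univ, if_true, Finset.sum_ite, Finset.sum_const_zero, add_zero]

theorem eval_pderiv_sum_X_pow_mul_X_eq_zero (i : σ → σ) {n : ℕ} (hn : 2 ≤ n) {a b : σ}
    (hab : a ≠ b) (hib : i a = i b) (x : σ → R) (hx : ∀ c, c ≠ a → c ≠ b → x c = 0)
    (hxi : x (i a) = 0) (hsum : x a ^ n + x b ^ n = 0) (j : σ) :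
    eval x (pderiv j (∑ c, X c ^ n * X (i c))) = 0 := by
  have hpow : ∀ c, c ≠ a → c ≠ b → ∀ m, m ≠ 0 → x c ^ m = 0 := fun c hca hcb m hm => by
    rw [hx c hca hcb, zero_pow hm]
  have hfirst : x j ^ (n - 1) * x (i j) = 0 := by
    by_cases hj : j = a ∨ j = b
    · obtain rfl | rfl := hj <;> simp [hxi, ← hib]
    · rw [not_or] at hj
      rw [hpow j hj.1 hj.2 _ (by omega), zero_mul]
  have hsecond : ∑ c with i c = j, x c ^ n = 0 := by
    rw [Finset.sum_filter, ← Finset.sum_subset (Finset.subset_univ {a, b}), Finset.sum_pair hab,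
      ← hib]
    · split_ifs <;> simp [hsum]
    · intro c _ hc
      simp only [Finset.mem_insert, Finset.mem_singleton, not_or] at hc
      simp [hpow c hc.1 hc.2 n (by omega)]
  rw [eval_pderiv_sum_X_pow_mul_X, mul_assoc, hfirst, hsecond, mul_zero, add_zero]

end

theorem stmt_4_general (d k : ℕ) (hd : 3 ≤ d) (i : Fin k → Fin k)
    (a b : Fin k) (hab : a < b) (hib : i a = i b) (ha : i a ≠ a) (hb : i a ≠ b)
    (F : MvPolynomial (Fin k) ℂ)
    (hF : F = ∑ a : Fin k, X a ^ (d - 1) * X (i a)) :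
    ∃ x : Fin k → ℂ, x ≠ 0 ∧ ∀ j : Fin k, eval x (pderiv j F) = 0 := by
  obtain ⟨ζ, hζ⟩ := IsAlgClosed.exists_pow_nat_eq (-1 : ℂ) (by omega : 0 < d - 1)
  refine ⟨Pi.single a 1 + Pi.single b ζ, fun h => ?_, fun j => ?_⟩
  · simpa [hab.ne'] using congrFun h a
  · subst hF
    refine eval_pderiv_sum_X_pow_mul_X_eq_zero i (by omega) hab.ne hib _
      (fun c hca hcb => ?_) ?_ ?_ j
    · simp [hca, hcb]
    · simp [ha, hb]
    · simp [hab.ne', hab.ne, hζ]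

/-- If `i a = i b` for `a < b` with `i a ∉ {a, b}`, then `F = ∑ x_a^{d-1} x_{i a}`
is not smooth: all partial derivatives vanish at a nonzero point. -/
theorem stmt_4 (d k : ℕ) (hd : 3 ≤ d) (hk : 2 ≤ k) (i : Fin k → Fin k)
    (a b : Fin k) (hab : a < b) (hib : i a = i b) (ha : i a ≠ a) (hb : i a ≠ b)
    (F : MvPolynomial (Fin k) ℂ)
    (hF : F = ∑ a : Fin k, X a ^ (d - 1) * X (i a)) :
    ∃ x : Fin k → ℂ, x ≠ 0 ∧ ∀ j : Fin k, eval x (pderiv j F) = 0 :=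
  stmt_4_general d k hd i a b hab hib ha hb F hF
end

section
/- Let d ≥ 3 and N ≥ 1 be integers, let m = |1 - (1-d)^N|, and let ζ ∈ ℂ be a primitive m-th root of unity. Then the diagonal matrix g = diag(ζ, ζ^{1-d}, ζ^{(1-d)^2}, …, ζ^{(1-d)^{N-1}}) satisfies: for the Klein polynomial F = x₁^{d-1}x₂ + ⋯ + x_{N-1}^{d-1}x_N + x_N^{d-1}x₁, we have F(g·x) = F(x) for all x ∈ ℂ^N, and the image of g in PGL(N,ℂ) has order m/d. -/
open MvPolynomial

/-!
Write `t = 1 - d`, so that `g = diag(ζ^{t^j})` and `d - 1 = -t`. The monomial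
`x_i^{d-1} x_{i+1}` is rescaled by `ζ^{t^{(i+1) mod N} - t^{i+1}}`, and
`t^N - 1 ∣ t^{n mod N} - t^n`, so every monomial is fixed since `m = |t^N - 1|`.
Because `t ≡ 1 (mod d)` and `d ∣ m`, all entries of `g^{m/d}` equal `ζ^{m/d}`;
conversely, if `g^r` is scalar then comparing its entries at `0` and `1 mod N`, where
`t^{1 mod N} ≡ t (mod m)`, gives `ζ^{dr} = 1`, i.e. `m ∣ d r`.
-/

lemma pow_sub_one_dvd_pow_mod_sub_pow {R : Type*} [CommRing R] (t : R) (N n : ℕ) :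
    t ^ N - 1 ∣ t ^ (n % N) - t ^ n := by
  have h : t ^ n = t ^ (n % N) * (t ^ N) ^ (n / N) := by
    rw [← pow_mul, ← pow_add, Nat.mod_add_div]
  have hdvd : t ^ N - 1 ∣ (t ^ N) ^ (n / N) - 1 := by
    simpa only [one_pow] using sub_dvd_pow_sub_pow (t ^ N) 1 (n / N)
  rw [h, show t ^ (n % N) - t ^ (n % N) * (t ^ N) ^ (n / N)
      = -(t ^ (n % N) * ((t ^ N) ^ (n / N) - 1)) by ring]
  exact (hdvd.mul_left _).neg_right

lemma Int.pow_ne_one_of_two_le_natAbs {t : ℤ} (ht : 2 ≤ t.natAbs) {N : ℕ} (hN : N ≠ 0) :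
    t ^ N ≠ 1 := by
  intro h
  have := congrArg Int.natAbs h
  rw [Int.natAbs_pow, Int.natAbs_one, Nat.pow_eq_one] at this
  omega

lemma MvPolynomial.eval_mul_sum_X_pow_mul_X {R ι : Type*} [CommSemiring R] [Fintype ι]
    (k : ℕ) (σ : ι → ι) (w x : ι → R) (hw : ∀ i, w i ^ k * w (σ i) = 1) :
    eval (fun j => w j * x j) (∑ i, X i ^ k * X (σ i)) = eval x (∑ i, X i ^ k * X (σ i)) := by
  simp only [map_sum, eval_mul, eval_pow, eval_X]
  refine Finset.sum_congr rfl fun i _ => ?_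
  rw [mul_pow, mul_mul_mul_comm, hw, one_mul]

namespace IsPrimitiveRoot

variable {G₀ : Type*} [CommGroupWithZero G₀] {ζ : G₀}

theorem zpow_eq_zpow_iff_modEq {k : ℕ} (hζ : IsPrimitiveRoot ζ k) (hζ0 : ζ ≠ 0)
    {a b : ℤ} : ζ ^ a = ζ ^ b ↔ a ≡ b [ZMOD k] := by
  rw [Int.modEq_iff_dvd, ← hζ.zpow_eq_one_iff_dvd, zpow_sub₀ hζ0,
    div_eq_one_iff_eq (zpow_ne_zero _ hζ0), eq_comm]

lemma zpow_pow_mod {m N : ℕ} (hζ : IsPrimitiveRoot ζ m) (hζ0 : ζ ≠ 0) {t : ℤ}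
    (hm : (m : ℤ) ∣ t ^ N - 1) (n : ℕ) : ζ ^ t ^ (n % N) = ζ ^ t ^ n := by
  rw [hζ.zpow_eq_zpow_iff_modEq hζ0]
  exact (Int.modEq_iff_dvd.mpr (hm.trans (pow_sub_one_dvd_pow_mod_sub_pow t N n))).symm

lemma zpow_pow_mul_zpow_pow_mod_eq_one {m N : ℕ} (hζ : IsPrimitiveRoot ζ m) (hζ0 : ζ ≠ 0)
    {t : ℤ} (hm : (m : ℤ) ∣ t ^ N - 1) {k : ℕ} (hk : (k : ℤ) = -t) (n : ℕ) :
    (ζ ^ t ^ n) ^ k * ζ ^ t ^ ((n + 1) % N) = 1 := by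
  rw [hζ.zpow_pow_mod hζ0 hm, ← zpow_natCast, ← zpow_mul, ← zpow_add₀ hζ0, hk,
    show t ^ n * -t + t ^ (n + 1) = 0 by ring, zpow_zero]

lemma zpow_pow_pow_eq_pow {d q : ℕ} (hζ : IsPrimitiveRoot ζ (d * q)) (hζ0 : ζ ≠ 0) {t : ℤ}
    (ht : t ≡ 1 [ZMOD d]) (j : ℕ) : (ζ ^ t ^ j) ^ q = ζ ^ q := by
  rw [← zpow_natCast, ← zpow_mul, ← zpow_natCast ζ q, hζ.zpow_eq_zpow_iff_modEq hζ0]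
  simpa only [one_pow, one_mul, Nat.cast_mul] using (ht.pow j).mul_right' (c := (q : ℤ))

lemma dvd_mul_of_zpow_one_sub_pow_eq {m d r : ℕ} (hζ : IsPrimitiveRoot ζ m) (hζ0 : ζ ≠ 0)
    (h : (ζ ^ (1 - d : ℤ)) ^ r = ζ ^ r) : m ∣ d * r := by
  rw [← zpow_natCast, ← zpow_mul, ← zpow_natCast ζ r, hζ.zpow_eq_zpow_iff_modEq hζ0,
    Int.modEq_iff_dvd, show (r : ℤ) - (1 - d) * r = ((d * r : ℕ) : ℤ) by push_cast; ring] at h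
  exact_mod_cast h

end IsPrimitiveRoot

/-- The diagonal matrix `g = diag(ζ, ζ^{1-d}, …, ζ^{(1-d)^{N-1}})`, with `ζ` a
primitive `m`-th root of unity for `m = |1-(1-d)^N|`, leaves the Klein
polynomial invariant, and its class in `PGL(N, ℂ)` (i.e. modulo scalars) has
order exactly `m / d`. -/
theorem stmt_6 (d N : ℕ) (hd : 3 ≤ d) (hN : 1 ≤ N) (m : ℕ)
    (hm : m = ((1 : ℤ) - (1 - (d : ℤ)) ^ N).natAbs)
    (ζ : ℂ) (hζ : IsPrimitiveRoot ζ m)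
    (F : MvPolynomial (Fin N) ℂ)
    (hF : F = ∑ i : Fin N,
      X i ^ (d - 1) * X (⟨(i.val + 1) % N, Nat.mod_lt _ (by omega)⟩ : Fin N)) :
    (∀ x : Fin N → ℂ,
      eval (fun j : Fin N => ζ ^ ((1 - (d : ℤ)) ^ (j : ℕ)) * x j) F = eval x F) ∧
    IsLeast {r : ℕ | 0 < r ∧ ∃ c : ℂ, ∀ j : Fin N,
      (ζ ^ ((1 - (d : ℤ)) ^ (j : ℕ))) ^ r = c} (m / d) := by
  set t : ℤ := 1 - d with ht
  have hm_dvd : (m : ℤ) ∣ t ^ N - 1 := by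
    rw [hm, Int.natAbs_dvd, ← dvd_neg, neg_sub]
  have hm0 : m ≠ 0 := by
    rw [hm, Int.natAbs_ne_zero, sub_ne_zero]
    exact (Int.pow_ne_one_of_two_le_natAbs (by omega) (by omega)).symm
  have hζ0 : ζ ≠ 0 := hζ.ne_zero hm0
  have ht_modEq : t ≡ 1 [ZMOD d] := (Int.modEq_iff_dvd.mpr ⟨-1, by ring⟩).symm
  obtain ⟨q, rfl⟩ : d ∣ m := by
    rw [← Int.natCast_dvd_natCast, hm, Int.dvd_natAbs]
    simpa only [one_pow] using (ht_modEq.pow N).dvd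
  rw [Nat.mul_div_cancel_left q (by omega)]
  refine ⟨fun x => ?_, ⟨Nat.pos_of_ne_zero (right_ne_zero_of_mul hm0), ζ ^ q,
    fun j => hζ.zpow_pow_pow_eq_pow hζ0 ht_modEq j⟩, ?_⟩
  · subst hF
    exact eval_mul_sum_X_pow_mul_X _ _ _ x fun i =>
      hζ.zpow_pow_mul_zpow_pow_mod_eq_one hζ0 hm_dvd (by omega) i
  · rintro r ⟨hr, c, hc⟩
    have h_two_entries : (ζ ^ t) ^ r = ζ ^ r := by
      have h_second := hc ⟨1 % N, Nat.mod_lt _ (by omega)⟩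
      rw [← hc ⟨0, by omega⟩] at h_second
      simpa only [hζ.zpow_pow_mod hζ0 hm_dvd, pow_zero, pow_one, zpow_one] using h_second
    exact Nat.le_of_dvd hr (Nat.dvd_of_mul_dvd_mul_left (by omega)
      (hζ.dvd_mul_of_zpow_one_sub_pow_eq hζ0 h_two_entries))
end

section
/- Let d ≥ 3 and N ≥ 1 be integers, and let ζ ∈ ℂ be a primitive (d-1)^{N-1}-th root of unity. Then the diagonal matrix g = diag(ζ, ζ^{1-d}, …, ζ^{(1-d)^{N-1}}) satisfies F(g·x) = F(x) for the polynomial F = x₁^{d-1}x₂ + ⋯ + x_{N-1}^{d-1}x_N + x_N^d, and the image of g in PGL(N,ℂ) has order (d-1)^{N-1}. -/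
open MvPolynomial

/-- The diagonal matrix `g = diag(ζ, ζ^{1-d}, …, ζ^{(1-d)^{N-1}})`, with `ζ` a
primitive `(d-1)^{N-1}`-th root of unity, leaves the type-`T_N` polynomial
`x₁^{d-1}x₂ + ⋯ + x_{N-1}^{d-1}x_N + x_N^d` invariant, and its class in
`PGL(N, ℂ)` (i.e. modulo scalars) has order exactly `(d-1)^{N-1}`. -/
theorem stmt_7 (d N : ℕ) (hd : 3 ≤ d) (hN : 1 ≤ N)
    (ζ : ℂ) (hζ : IsPrimitiveRoot ζ ((d - 1) ^ (N - 1)))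
    (F : MvPolynomial (Fin N) ℂ)
    (hF : F = ∑ i : Fin N,
      X i ^ (d - 1) * X (⟨min (i.val + 1) (N - 1), by omega⟩ : Fin N)) :
    (∀ x : Fin N → ℂ,
      eval (fun j : Fin N => ζ ^ ((1 - (d : ℤ)) ^ (j : ℕ)) * x j) F = eval x F) ∧
    IsLeast {r : ℕ | 0 < r ∧ ∃ c : ℂ, ∀ j : Fin N,
      (ζ ^ ((1 - (d : ℤ)) ^ (j : ℕ))) ^ r = c} ((d - 1) ^ (N - 1)) := by
  set n : ℕ := (d - 1) ^ (N - 1) with hn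
  have hnpos : 0 < n := Nat.pow_pos (by omega : 0 < d - 1)
  have hζ0 : ζ ≠ 0 := fun h => by
    have := hζ.pow_eq_one
    rw [h, zero_pow hnpos.ne'] at this
    exact zero_ne_one this
  -- ζ^k = 1 whenever n ∣ k
  have hone : ∀ k : ℤ, (n : ℤ) ∣ k → ζ ^ k = 1 := by
    intro k hk
    exact (hζ.zpow_eq_one_iff_dvd k).mpr hk
  -- key: (1 - d)^(N-1) is ± n
  have hcast : (1 - (d : ℤ)) = -(((d - 1 : ℕ) : ℤ)) := by
    push_cast [Nat.cast_sub (by omega : 1 ≤ d)]; ring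
  have hdvd_last : (n : ℤ) ∣ (1 - (d : ℤ)) ^ (N - 1) := by
    rw [hcast, neg_pow]
    exact Dvd.dvd.mul_left (by push_cast [hn]; exact dvd_refl _) _
  constructor
  · -- invariance of F
    intro x
    rw [hF]
    rw [map_sum, map_sum]
    apply Finset.sum_congr rfl
    intro i _
    rw [eval_mul, eval_mul, eval_pow, eval_pow, eval_X, eval_X, eval_X, eval_X]
    simp only
    rw [mul_pow, ← zpow_natCast (ζ ^ _) (d - 1), ← zpow_mul]
    rw [mul_mul_mul_comm, ← zpow_add₀ hζ0]
    set e : ℤ := (1 - (d : ℤ)) ^ (i : ℕ) * (d - 1 : ℕ) + (1 - (d : ℤ)) ^ (min ((i : ℕ) + 1) (N - 1))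
    have he1 : ζ ^ e = 1 := by
      rcases lt_or_ge ((i : ℕ) + 1) N with h | h
      · have hmin : min ((i : ℕ) + 1) (N - 1) = (i : ℕ) + 1 := by omega
        have : e = 0 := by
          simp only [e, hmin, pow_succ]
          have : ((d - 1 : ℕ) : ℤ) = (d : ℤ) - 1 := by push_cast [Nat.cast_sub (by omega : 1 ≤ d)]; ring
          rw [this]; ring
        rw [this, zpow_zero]
      · -- i = N - 1
        have hi : (i : ℕ) = N - 1 := by have := i.isLt; omega
        have hmin : min ((i : ℕ) + 1) (N - 1) = N - 1 := by omega
        apply hone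
        simp only [e]
        rw [hmin, hi]
        have : ((d - 1 : ℕ) : ℤ) = (d : ℤ) - 1 := by push_cast [Nat.cast_sub (by omega : 1 ≤ d)]; ring
        rw [this]
        have : (1 - (d : ℤ)) ^ (N - 1) * ((d : ℤ) - 1) + (1 - (d : ℤ)) ^ (N - 1)
            = (1 - (d : ℤ)) ^ (N - 1) * (d : ℤ) := by ring
        rw [this]
        exact hdvd_last.mul_right _
    rw [he1, one_mul]
  · constructor
    · -- n is in the set
      refine ⟨hnpos, 1, fun j => ?_⟩
      rw [← zpow_natCast (ζ ^ _) n, ← zpow_mul]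
      exact hone _ (Dvd.dvd.mul_left (dvd_refl _) _)
    · -- n is a lower bound
      intro r hr
      obtain ⟨hrpos, c, hc⟩ := hr
      rcases Nat.lt_or_ge N 2 with hN2 | hN2
      · have : N = 1 := by omega
        show (d - 1) ^ (N - 1) ≤ r
        rw [show N - 1 = 0 by omega, pow_zero]
        omega
      · -- use j = 0 and j = 1
        have h0 := hc ⟨0, by omega⟩
        have h1 := hc ⟨1, by omega⟩
        simp only [pow_zero, pow_one, zpow_one] at h0 h1
        have heq : ζ ^ (r : ℤ) = ζ ^ ((1 - (d : ℤ)) * r) := by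
          rw [zpow_natCast, zpow_mul, zpow_natCast, h0, h1]
        have hkey : ζ ^ ((r : ℤ) * d) = 1 := by
          have h2 : ζ ^ ((r : ℤ) - (1 - (d : ℤ)) * r) = 1 := by
            rw [zpow_sub₀ hζ0, heq, div_self (zpow_ne_zero _ hζ0)]
          have h3 : (r : ℤ) * d = (r : ℤ) - (1 - (d : ℤ)) * r := by ring
          rw [h3]; exact h2
        have hdvd : (n : ℤ) ∣ (r : ℤ) * d := (hζ.zpow_eq_one_iff_dvd _).mp hkey
        have hdvdn : n ∣ r * d := by exact_mod_cast hdvd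
        have hcop : Nat.Coprime n d := by
          have h' : Nat.Coprime (d - 1) (1 + (d - 1)) :=
            Nat.coprime_add_self_right.mpr (Nat.coprime_one_right _)
          have : Nat.Coprime (d - 1) d := by
            rwa [show 1 + (d - 1) = d by omega] at h'
          exact Nat.Coprime.pow_left _ this
        exact Nat.le_of_dvd hrpos (hcop.dvd_of_dvd_mul_right hdvdn)
end

section
/- Let k ≥ 2 and d ≥ 2 be integers, let G₁,…,G_k be finite cyclic groups, and for each i let u_i ∈ G_i be an element of order d. Let G = (G₁ × ⋯ × G_k)/⟨(u₁,…,u_k)⟩. Then an integer n ≥ 1 is the order of some element of G if and only if n divides lcm(|G₁|,…,|G_k|). -/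
/-!
The quotient `Q = (∏ Gᵢ)/⟨u⟩` is a finite abelian group, so the orders of its elements are
exactly the divisors of its exponent; it remains to see that `exp Q = lcm |Gᵢ|`. The exponent
can only drop under the quotient map, and it does not drop: since `k ≥ 2`, every factor `Gᵢ`
has a partner `Gⱼ`, `j ≠ i`, and an element `g ∈ Gᵢ` placed in coordinate `i` lies in `⟨u⟩`
only if `g = uᵢᵗ` with `uⱼᵗ = 1`, which forces `uᵢᵗ = 1` because `uᵢ` and `uⱼ` have the same
order. Hence each `Gᵢ` embeds in `Q`.
-/

open Function

theorem Monoid.exists_orderOf_eq_iff_dvd_exponent {M : Type*} [CommMonoid M]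
    (hM : Monoid.ExponentExists M) (n : ℕ) :
    (∃ x : M, orderOf x = n) ↔ n ∣ Monoid.exponent M := by
  constructor
  · rintro ⟨x, rfl⟩
    exact Monoid.order_dvd_exponent x
  · intro hn
    obtain ⟨x, hx⟩ := Monoid.exists_orderOf_eq_exponent hM
    refine ⟨x ^ (orderOf x / n), orderOf_pow_orderOf_div ?_ (hx ▸ hn)⟩
    exact (hM.orderOf_pos x).ne'

section PiQuotientZPowers

variable {ι : Type*} [DecidableEq ι] {G : ι → Type*} [∀ i, CommGroup (G i)]

theorem injective_mk_comp_mulSingle {u : ∀ i, G i} {i j : ι} (hji : j ≠ i)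
    (hdvd : orderOf (u i) ∣ orderOf (u j)) :
    Injective ((QuotientGroup.mk' (Subgroup.zpowers u)).comp (MonoidHom.mulSingle G i)) := by
  refine (injective_iff_map_eq_one _).mpr fun g hg => ?_
  obtain ⟨t, ht⟩ : Pi.mulSingle i g ∈ Subgroup.zpowers u := (QuotientGroup.eq_one_iff _).mp hg
  have huj : u j ^ t = 1 := by
    simpa [Pi.mulSingle_eq_of_ne hji] using congrFun ht j
  have hui : u i ^ t = 1 :=
    orderOf_dvd_iff_zpow_eq_one.mp (hdvd.natCast.trans (orderOf_dvd_iff_zpow_eq_one.mpr huj))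
  simpa [hui] using (congrFun ht i).symm

theorem exponent_pi_quotient_zpowers [Fintype ι] {u : ∀ i, G i}
    (hu : ∀ i, ∃ j ≠ i, orderOf (u i) ∣ orderOf (u j)) :
    Monoid.exponent ((∀ i, G i) ⧸ Subgroup.zpowers u) =
      Finset.univ.lcm fun i => Monoid.exponent (G i) := by
  refine dvd_antisymm ?_ (Finset.lcm_dvd fun i _ => ?_)
  · exact (Group.exponent_quotient_dvd _).trans Monoid.exponent_pi.dvd
  · obtain ⟨j, hji, hdvd⟩ := hu i
    exact Monoid.exponent_dvd_of_monoidHom _ (injective_mk_comp_mulSingle hji hdvd)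

end PiQuotientZPowers

theorem stmt_10_general (k d : ℕ) (hk : 2 ≤ k)
    (G : Fin k → Type*) [∀ i, CommGroup (G i)] [∀ i, Fintype (G i)]
    [∀ i, IsCyclic (G i)]
    (u : ∀ i, G i) (hu : ∀ i, orderOf (u i) = d)
    (n : ℕ) :
    (∃ x : (∀ i, G i) ⧸ Subgroup.zpowers u, orderOf x = n) ↔
      n ∣ Finset.univ.lcm (fun i : Fin k => Fintype.card (G i)) := by
  have hpartner : ∀ i, ∃ j ≠ i, orderOf (u i) ∣ orderOf (u j) := fun i => by
    obtain ⟨j, hji⟩ := Fintype.exists_ne_of_one_lt_card (by rw [Fintype.card_fin]; omega) i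
    exact ⟨j, hji, by rw [hu, hu]⟩
  rw [Monoid.exists_orderOf_eq_iff_dvd_exponent Monoid.ExponentExists.of_finite,
    exponent_pi_quotient_zpowers hpartner]
  simp only [IsCyclic.exponent_eq_card, Nat.card_eq_fintype_card]

/-- For finite cyclic groups `G₁,…,G_k` and elements `u_i ∈ G_i` of order `d`,
an integer `n ≥ 1` is the order of an element of
`(G₁ × ⋯ × G_k)/⟨(u₁,…,u_k)⟩` iff `n` divides `lcm(|G₁|,…,|G_k|)`. -/
theorem stmt_10 (k d : ℕ) (hk : 2 ≤ k) (hd : 2 ≤ d)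
    (G : Fin k → Type*) [∀ i, CommGroup (G i)] [∀ i, Fintype (G i)]
    [∀ i, IsCyclic (G i)]
    (u : ∀ i, G i) (hu : ∀ i, orderOf (u i) = d)
    (n : ℕ) (hn : 1 ≤ n) :
    (∃ x : (∀ i, G i) ⧸ Subgroup.zpowers u, orderOf x = n) ↔
      n ∣ Finset.univ.lcm (fun i : Fin k => Fintype.card (G i)) :=
  stmt_10_general k d hk G u hu n
end

section
/- Let F(x₁,…,x_N) be a smooth homogeneous polynomial of degree d ≥ 3 over ℂ in N ≥ 2 variables. Let a > b ≥ 0 and let i₁,…,i_a, j₁,…,j_b ∈ {1,…,N} be distinct indices. Then F contains a monomial with nonzero coefficient in which the total degree of the variables x_{i₁},…,x_{i_a} is at least d−1 and none of the variables x_{j₁},…,x_{j_b} appears. -/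
/-!
If no such monomial exists, then for `i ∉ B` every monomial of `∂F/∂xᵢ` contains a variable
outside `A`, so these partials vanish on the coordinate subspace `ℂ^A`. The ideal of `ℂ^A`
together with the partials `∂F/∂xⱼ`, `j ∈ B`, is generated by `(N - |A|) + |B| < N` polynomials
vanishing at `0`. The maximal ideal of a point of `ℂ^N` has height `N`, so by Krull's height
theorem it is not minimal over them: they have a common zero other than `0`, which is a singular
point of `F`.
-/

open MvPolynomial

namespace MvPolynomial

variable {K σ : Type*} [Field K]

theorem height_vanishingIdeal_singleton_eq (x y : σ → K) :
    (vanishingIdeal K {x}).height = (vanishingIdeal K {y}).height := by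
  let e : MvPolynomial σ K ≃ₐ[K] MvPolynomial σ K :=
    AlgEquiv.ofAlgHom (aeval fun i => X i + C (x i - y i)) (aeval fun i => X i - C (x i - y i))
      (by ext; simp) (by ext; simp)
  have : (vanishingIdeal K {y}).comap e.toRingEquiv = vanishingIdeal K {x} := by
    ext p
    have hshift : aeval y (aeval (fun i => X i + C (x i - y i)) p) = aeval x p := by
      induction p using MvPolynomial.induction_on <;> simp_all
    rw [Ideal.mem_comap, mem_vanishingIdeal_singleton_iff, mem_vanishingIdeal_singleton_iff,
      ← hshift]
    rfl
  rw [← this, RingEquiv.height_comap]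

theorem height_vanishingIdeal_singleton [IsAlgClosed K] [Finite σ] (x : σ → K) :
    (vanishingIdeal K {x}).height = Nat.card σ := by
  have hdim : ringKrullDim (MvPolynomial σ K) = Nat.card σ := by simp
  have hle :
      ((vanishingIdeal K {x}).height : WithBot ℕ∞) ≤ ringKrullDim (MvPolynomial σ K) :=
    Ideal.height_le_ringKrullDim_of_ne_top Ideal.IsPrime.ne_top'
  have hge : ringKrullDim (MvPolynomial σ K) ≤ (vanishingIdeal K {x}).height := by
    refine (ringKrullDim_le_iff_isMaximal_height_le _).mpr fun M hM ↦ ?_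
    obtain ⟨y, rfl⟩ := isMaximal_iff_eq_vanishingIdeal_singleton.mp hM
    rw [height_vanishingIdeal_singleton_eq y x]
  exact_mod_cast (le_antisymm hle hge).trans hdim

theorem exists_ne_forall_eval_eq_zero_of_card_lt [IsAlgClosed K] [Finite σ]
    {s : Finset (MvPolynomial σ K)} (hs : s.card < Nat.card σ) {x : σ → K}
    (hx : ∀ p ∈ s, eval x p = 0) :
    ∃ y ≠ x, ∀ p ∈ s, eval y p = 0 := by
  by_contra! hisolated
  have hzero : zeroLocus K (Ideal.span (s : Set (MvPolynomial σ K))) = {x} := by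
    ext y
    simp only [zeroLocus_span, Finset.mem_coe, Set.mem_ofPred_eq, Set.mem_singleton_iff]
    refine ⟨fun hy ↦ ?_, fun hy ↦ hy ▸ hx⟩
    by_contra hne
    obtain ⟨p, hp, hyp⟩ := hisolated y hne
    exact hyp (hy p hp)
  have hmin :
      vanishingIdeal K {x} ∈ (Ideal.span (s : Set (MvPolynomial σ K))).minimalPrimes := by
    rw [← Ideal.radical_minimalPrimes, ← vanishingIdeal_zeroLocus_eq_radical (K := K), hzero,
      Ideal.minimalPrimes_eq_subsingleton_self]
    rfl
  have hheight := Ideal.height_le_card_of_mem_minimalPrimes_span_finset hmin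
  rw [height_vanishingIdeal_singleton] at hheight
  exact absurd (by exact_mod_cast hheight) hs.not_ge

theorem eval_pderiv_eq_zero_of_forall_mem_support {R : Type*} [CommRing R]
    {F : MvPolynomial σ R} {i : σ} {x : σ → R}
    (h : ∀ m ∈ F.support, m i ≠ 0 →
      ∃ k, (m - Finsupp.single i 1 : σ →₀ ℕ) k ≠ 0 ∧ x k = 0) :
    eval x (pderiv i F) = 0 := by
  rw [F.as_sum, map_sum, map_sum]
  refine Finset.sum_eq_zero fun m hm ↦ ?_
  rw [pderiv_monomial, eval_monomial]
  by_cases hmi : m i = 0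
  · simp [hmi]
  obtain ⟨k, hk, hxk⟩ := h m hm hmi
  rw [Finsupp.prod, Finset.prod_eq_zero (Finsupp.mem_support_iff.mpr hk) (by rw [hxk, zero_pow hk]),
    mul_zero]

end MvPolynomial

theorem Finsupp.degree_sub_one_le_sum_of_sub_single {σ : Type*} [Fintype σ] {m : σ →₀ ℕ}
    {A : Finset σ} {i : σ} (hA : ∀ k ∉ A, (m - single i 1 : σ →₀ ℕ) k = 0) :
    m.degree - 1 ≤ ∑ k ∈ A, m k := by
  classical
  have hle : m ≤ (m - single i 1) + single i 1 := le_tsub_add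
  calc m.degree - 1 ≤ (m - single i 1).degree := by
        have := Finsupp.degree_mono hle
        rw [map_add, Finsupp.degree_single] at this
        omega
    _ = ∑ k ∈ A, (m - single i 1 : σ →₀ ℕ) k := by
        rw [Finsupp.degree_eq_sum]
        exact (Finset.sum_subset (Finset.subset_univ A) fun k _ hk ↦ hA k hk).symm
    _ ≤ ∑ k ∈ A, m k := Finset.sum_le_sum fun k _ ↦ tsub_le_self

theorem MvPolynomial.eval_pderiv_eq_zero_of_forall_mem_support_sum_le
    {R σ : Type*} [CommRing R] [Fintype σ] {F : MvPolynomial σ R} {d : ℕ}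
    (hhom : F.IsHomogeneous d) {A B : Finset σ} (hdisj : Disjoint A B)
    (hF : ∀ m ∈ F.support, d - 1 ≤ ∑ k ∈ A, m k → ∃ j ∈ B, m j ≠ 0)
    {y : σ → R} (hy : ∀ k ∉ A, y k = 0) {i : σ} (hi : i ∉ B) :
    eval y (pderiv i F) = 0 := by
  refine eval_pderiv_eq_zero_of_forall_mem_support fun m hm hmi ↦ ?_
  by_contra! hsupp
  have hsuppA : ∀ k ∉ A, (m - Finsupp.single i 1 : σ →₀ ℕ) k = 0 := fun k hk ↦ by
    by_contra hne
    exact hsupp k hne (hy k hk)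
  have hdeg : m.degree = d := by
    rw [Finsupp.degree_eq_weight_one]
    exact hhom (mem_support_iff.mp hm)
  obtain ⟨j, hjB, hmj⟩ := hF m hm (hdeg ▸ Finsupp.degree_sub_one_le_sum_of_sub_single hsuppA)
  have hji : j ≠ i := fun h ↦ hi (h ▸ hjB)
  have hmj' := hsuppA j (Finset.disjoint_right.mp hdisj hjB)
  simp [hji.symm] at hmj'
  exact hmj hmj'

theorem stmt_12_general (d N : ℕ) (hd : 3 ≤ d)
    (F : MvPolynomial (Fin N) ℂ) (hhom : F.IsHomogeneous d)
    (hsmooth : ∀ x : Fin N → ℂ, (∀ i : Fin N, eval x (pderiv i F) = 0) → x = 0)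
    (A B : Finset (Fin N)) (hdisj : Disjoint A B) (hcard : B.card < A.card) :
    ∃ m ∈ F.support, d - 1 ≤ ∑ i ∈ A, m i ∧ ∀ j ∈ B, m j = 0 := by
  by_contra! hcon
  classical
  set s := B.image (pderiv · F) ∪ Aᶜ.image X
  have hs : s.card < Nat.card (Fin N) := calc
    s.card ≤ (B.image (pderiv · F)).card + (Aᶜ.image X).card := Finset.card_union_le _ _
    _ ≤ B.card + Aᶜ.card := add_le_add Finset.card_image_le Finset.card_image_le
    _ < Nat.card (Fin N) := by
      have := A.card_le_univ
      rw [Finset.card_compl, Nat.card_eq_fintype_card]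
      omega
  have hs0 : ∀ p ∈ s, eval 0 p = 0 := by
    simp only [s, Finset.mem_union, Finset.mem_image]
    rintro p (⟨j, -, rfl⟩ | ⟨k, -, rfl⟩)
    · rw [eval_zero]
      exact (hhom.pderiv (i := j)).coeff_eq_zero (by simp; omega)
    · simp
  obtain ⟨y, hy0, hy⟩ := exists_ne_forall_eval_eq_zero_of_card_lt hs hs0
  have hyA : ∀ k ∉ A, y k = 0 := fun k hk ↦ by
    simpa using hy (X k) (Finset.mem_union_right _ (Finset.mem_image_of_mem X (by simpa)))
  refine hy0 (hsmooth y fun i ↦ ?_)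
  by_cases hiB : i ∈ B
  · exact hy _ (Finset.mem_union_left _ (Finset.mem_image_of_mem _ hiB))
  · exact eval_pderiv_eq_zero_of_forall_mem_support_sum_le hhom hdisj hcon hyA hiB

/-- Lemma 4.1 (criterion): if `F` is a smooth homogeneous polynomial of degree
`d ≥ 3` and `A`, `B` are disjoint index sets with `|A| > |B|`, then `F` has a
monomial (with nonzero coefficient) whose total degree in the variables of `A`
is at least `d - 1` and in which no variable of `B` appears. -/
theorem stmt_12 (d N : ℕ) (hd : 3 ≤ d) (hN : 2 ≤ N)
    (F : MvPolynomial (Fin N) ℂ) (hhom : F.IsHomogeneous d)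
    (hsmooth : ∀ x : Fin N → ℂ, (∀ i : Fin N, eval x (pderiv i F) = 0) → x = 0)
    (A B : Finset (Fin N)) (hdisj : Disjoint A B) (hcard : B.card < A.card) :
    ∃ m ∈ F.support, d - 1 ≤ ∑ i ∈ A, m i ∧ ∀ j ∈ B, m j = 0 :=
  stmt_12_general d N hd F hhom hsmooth A B hdisj hcard
end

section
/- The diagonal projective transformation g of ℙ⁵ given by (x₁,…,x₆) ↦ (ζ³x₁, ζ^{-6}x₂, ζ^{12}x₃, ζ^{-24}x₄, x₅, ζ^{16}x₆), where ζ = exp(2πi/48), has order 48 in PGL(6,ℂ), and the cubic polynomial F = x₁²x₂ + x₂²x₃ + x₃²x₄ + x₄²x₅ + x₅³ + x₆³ satisfies F(g·x) = F(x); moreover F is smooth, so the smooth cubic fourfold V(F) admits an automorphism of order 48. -/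
open MvPolynomial Complex

/-!
Every monomial of `F` has total weight divisible by `48` for the weights
`σ = (3, -6, 12, -24, 0, 16)`, which gives invariance. Since `σ₅ = 0`, the power `g^r` is scalar
exactly when `48 ∣ σⱼ r` for all `j`, and the weights `3` and `16` alone force `48 ∣ r`.
For smoothness, the partials `2x₁x₂, x₁² + 2x₂x₃, x₂² + 2x₃x₄, x₃² + 2x₄x₅, x₄² + 3x₅², 3x₆²`
kill the coordinates one after another, because `a b = 0` and `a² + u b c = 0` give `a³ = 0`.
-/

theorem IsPrimitiveRoot.zpow_pow_eq_one_iff_dvd {G : Type*} [DivisionCommMonoid G] {ζ : G}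
    {n : ℕ} (hζ : IsPrimitiveRoot ζ n) (a : ℤ) (r : ℕ) :
    (ζ ^ a) ^ r = 1 ↔ (n : ℤ) ∣ a * r := by
  rw [← zpow_natCast, ← zpow_mul, hζ.zpow_eq_one_iff_dvd]

theorem exists_forall_pow_eq_iff_of_eq_one {M ι : Type*} [Monoid M] (g : ι → M) {k : ι}
    (hk : g k = 1) (r : ℕ) : (∃ c : M, ∀ j, g j ^ r = c) ↔ ∀ j, g j ^ r = 1 := by
  refine ⟨fun ⟨c, hc⟩ j => ?_, fun h => ⟨1, h⟩⟩
  rw [hc j, ← hc k, hk, one_pow]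

theorem zpow_pow_mul_zpow_eq_one {G₀ : Type*} [GroupWithZero G₀] {ζ : G₀} (hζ0 : ζ ≠ 0) {n : ℕ}
    (hζ : ζ ^ n = 1) {a b : ℤ} (m : ℕ) (hdvd : (n : ℤ) ∣ a * m + b) :
    (ζ ^ a) ^ m * ζ ^ b = 1 := by
  obtain ⟨k, hk⟩ := hdvd
  rw [← zpow_natCast (ζ ^ a), ← zpow_mul, ← zpow_add₀ hζ0, hk, zpow_mul, zpow_natCast, hζ,
    one_zpow]

theorem eq_zero_of_mul_eq_zero_of_sq_add_mul_eq_zero {R : Type*} [CommRing R] [IsReduced R]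
    {a b c u : R} (hab : a * b = 0) (h : a ^ 2 + u * b * c = 0) : a = 0 :=
  IsNilpotent.eq_zero ⟨3, by linear_combination a * h - u * c * hab⟩

def cubicWeights : Fin 6 → ℤ := ![3, -6, 12, -24, 0, 16]

theorem isLeast_scalar_pow_cubicWeights {G : Type*} [DivisionCommMonoid G] {ζ : G}
    (hζ : IsPrimitiveRoot ζ 48) :
    IsLeast {r : ℕ | 0 < r ∧ ∃ c : G, ∀ j : Fin 6, (ζ ^ cubicWeights j) ^ r = c} 48 := by
  have hscalar (r : ℕ) : (∃ c : G, ∀ j : Fin 6, (ζ ^ cubicWeights j) ^ r = c) ↔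
      ∀ j : Fin 6, (48 : ℤ) ∣ cubicWeights j * r := by
    rw [exists_forall_pow_eq_iff_of_eq_one _ (k := 4) (zpow_zero ζ)]
    exact forall_congr' fun j => hζ.zpow_pow_eq_one_iff_dvd _ r
  simp only [IsLeast, lowerBounds, Set.mem_ofPred_eq, hscalar]
  refine ⟨⟨by norm_num, by decide⟩, fun r ⟨_, hr⟩ => ?_⟩
  have h3 : (48 : ℤ) ∣ 3 * r := hr 0
  have h16 : (48 : ℤ) ∣ 16 * r := hr 5
  omega

noncomputable def cubic (R : Type*) [CommSemiring R] : MvPolynomial (Fin 6) R :=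
  X 0 ^ 2 * X 1 + X 1 ^ 2 * X 2 + X 2 ^ 2 * X 3 + X 3 ^ 2 * X 4 + X 4 ^ 3 + X 5 ^ 3

section Cubic

variable {R : Type*}

theorem eval_cubic_zpow_cubicWeights_mul [Field R] {ζ : R} (hζ : ζ ^ 48 = 1) (x : Fin 6 → R) :
    eval (fun j => ζ ^ cubicWeights j * x j) (cubic R) = eval x (cubic R) := by
  have hζ0 : ζ ≠ 0 := by rintro rfl; norm_num at hζ
  have e01 := zpow_pow_mul_zpow_eq_one hζ0 hζ (a := 3) (b := -6) 2 (by norm_num)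
  have e12 := zpow_pow_mul_zpow_eq_one hζ0 hζ (a := -6) (b := 12) 2 (by norm_num)
  have e23 := zpow_pow_mul_zpow_eq_one hζ0 hζ (a := 12) (b := -24) 2 (by norm_num)
  have e34 := zpow_pow_mul_zpow_eq_one hζ0 hζ (a := -24) (b := 0) 2 (by norm_num)
  have e55 := zpow_pow_mul_zpow_eq_one hζ0 hζ (a := 16) (b := 0) 3 (by norm_num)
  simp only [cubic, cubicWeights, eval_add, eval_mul, eval_pow, eval_X, Matrix.cons_val,
    zpow_zero, one_mul, mul_one] at e34 e55 ⊢
  linear_combination (x 0 ^ 2 * x 1) * e01 + (x 1 ^ 2 * x 2) * e12 + (x 2 ^ 2 * x 3) * e23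
    + (x 3 ^ 2 * x 4) * e34 + x 5 ^ 3 * e55

theorem eval_pderiv_cubic [CommRing R] (x : Fin 6 → R) :
    (fun i => eval x (pderiv i (cubic R))) = ![2 * x 0 * x 1, x 0 ^ 2 + 2 * x 1 * x 2,
      x 1 ^ 2 + 2 * x 2 * x 3, x 2 ^ 2 + 2 * x 3 * x 4, x 3 ^ 2 + 3 * x 4 ^ 2, 3 * x 5 ^ 2] := by
  funext i
  fin_cases i <;>
    simp only [cubic, map_add, map_mul, map_pow, Derivation.leibniz, Derivation.leibniz_pow,
      pderiv_X, Pi.single_apply, Fin.reduceFinMk, Fin.reduceEq, Fin.isValue, ↓reduceIte,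
      smul_eq_mul, nsmul_eq_mul, eval_X, map_natCast, map_zero, map_one, Matrix.cons_val] <;>
    ring

theorem eq_zero_of_eval_pderiv_cubic [CommRing R] [IsDomain R] [CharZero R] (x : Fin 6 → R)
    (h : ∀ i, eval x (pderiv i (cubic R)) = 0) : x = 0 := by
  have step {a b c : R} (hab : a * b = 0) (habc : a ^ 2 + 2 * b * c = 0) : a = 0 ∧ b * c = 0 := by
    obtain rfl := eq_zero_of_mul_eq_zero_of_sq_add_mul_eq_zero hab habc
    exact ⟨rfl, by simpa using habc⟩
  have hgrad (i : Fin 6) := (congrFun (eval_pderiv_cubic x) i).symm.trans (h i)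
  have hx01 : x 0 * x 1 = 0 := by simpa [mul_assoc] using hgrad 0
  obtain ⟨hx0, hx12⟩ := step hx01 (hgrad 1)
  obtain ⟨hx1, hx23⟩ := step hx12 (hgrad 2)
  obtain ⟨hx2, hx34⟩ := step hx23 (hgrad 3)
  have hgrad4 : x 3 ^ 2 + 3 * x 4 ^ 2 = 0 := hgrad 4
  have hx3 : x 3 = 0 := eq_zero_of_mul_eq_zero_of_sq_add_mul_eq_zero hx34 (u := 3) (c := x 4)
    (by linear_combination hgrad4)
  have hx4 : x 4 = 0 := by simpa [hx3] using hgrad4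
  have hx5 : x 5 = 0 := by simpa using hgrad 5
  funext i
  fin_cases i <;> assumption

end Cubic

/-- The diagonal transformation with weights `ζ^{(3,-6,12,-24,0,16)}`,
`ζ = exp(2πi/48)`, has order `48` modulo scalars, preserves the smooth cubic
`F = x₁²x₂ + x₂²x₃ + x₃²x₄ + x₄²x₅ + x₅³ + x₆³`; hence the smooth cubic
fourfold `V(F)` admits an automorphism of order `48`. -/
theorem stmt_17 (ζ : ℂ) (hζ : ζ = Complex.exp (2 * Real.pi * Complex.I / 48))
    (σ : Fin 6 → ℤ) (hσ : σ = ![3, -6, 12, -24, 0, 16])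
    (F : MvPolynomial (Fin 6) ℂ)
    (hF : F = X 0 ^ 2 * X 1 + X 1 ^ 2 * X 2 + X 2 ^ 2 * X 3 + X 3 ^ 2 * X 4
      + X 4 ^ 3 + X 5 ^ 3) :
    IsLeast {r : ℕ | 0 < r ∧ ∃ c : ℂ, ∀ j : Fin 6, (ζ ^ σ j) ^ r = c} 48 ∧
    (∀ x : Fin 6 → ℂ, eval (fun j : Fin 6 => ζ ^ σ j * x j) F = eval x F) ∧
    (∀ x : Fin 6 → ℂ, (∀ i : Fin 6, eval x (pderiv i F) = 0) → x = 0) := by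
  have hprim : IsPrimitiveRoot ζ 48 := by
    rw [hζ]
    exact_mod_cast Complex.isPrimitiveRoot_exp 48 (by norm_num)
  subst hσ hF
  exact ⟨isLeast_scalar_pow_cubicWeights hprim,
    eval_cubic_zpow_cubicWeights_mul hprim.pow_eq_one, eq_zero_of_eval_pderiv_cubic⟩
end

section
/- Let G be a finite abelian group and suppose G acts faithfully and linearly on ℙ^{N-1} preserving a smooth hypersurface V(F) of degree d ≥ 3, with a given lifting G̃ ≤ GL(N,ℂ) of the projective action. Then there exists a (possibly different) lifting j : G → GL(N,ℂ) and a character λ : G → ℂ^× with j(g)(F) = λ(g)·F for all g ∈ G, such that λ(g) = 1 whenever the order of g is coprime to d. -/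
open MvPolynomial
open scoped Matrix

/-! The scalars `c g` with `g(F) = c g • F` form a character `χ` (trivially so if `F` vanishes
identically). Rescaling the lifting by a character `μ` replaces `χ` by `χ · μ⁻ᵈ`. Let `a` be the
product of the orders of the elements of order prime to `d`; then `a` is prime to `d`, so
`1 = u a + v d` for some integers `u, v`, and `μ = χ ^ v` turns `χ` into `χ ^ (u a)`, which is
trivial on every element whose order divides `a`. -/

theorem MvPolynomial.IsHomogeneous.eval_smul {σ R : Type*} [CommSemiring R]
    {F : MvPolynomial σ R} {n : ℕ} (hF : F.IsHomogeneous n) (c : R) (x : σ → R) :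
    eval (c • x) F = c ^ n * eval x F := by
  rw [eval_eq, eval_eq, Finset.mul_sum]
  refine Finset.sum_congr rfl fun s hs => ?_
  have hs_deg : ∑ i ∈ s.support, s i = n := by
    simpa [Finsupp.weight_apply, Finsupp.sum] using hF (mem_support_iff.mp hs)
  simp only [Pi.smul_apply, smul_eq_mul, mul_pow, Finset.prod_mul_distrib,
    Finset.prod_pow_eq_pow_sum, hs_deg]
  ring

theorem exists_zpow_eq_one_of_coprime_orderOf (G : Type*) [Group G] [Fintype G] (d : ℕ) :
    ∃ v : ℤ, ∀ g : G, (orderOf g).Coprime d → g ^ (1 - v * d) = 1 := by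
  classical
  set S := Finset.univ.filter fun g : G => (orderOf g).Coprime d
  have hS : (∏ g ∈ S, orderOf g).Coprime d :=
    Nat.Coprime.prod_left fun g hg => (Finset.mem_filter.mp hg).2
  obtain ⟨u, v, huv⟩ := Nat.isCoprime_iff_coprime.mpr hS
  refine ⟨v, fun g hg => ?_⟩
  have hg_dvd : orderOf g ∣ ∏ g ∈ S, orderOf g :=
    Finset.dvd_prod_of_mem _ (Finset.mem_filter.mpr ⟨Finset.mem_univ g, hg⟩)
  rw [show 1 - v * d = (∏ g ∈ S, orderOf g : ℕ) * u by linear_combination -huv, zpow_mul,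
    zpow_natCast, orderOf_dvd_iff_pow_eq_one.mp hg_dvd, one_zpow]

section

variable {ι K G : Type*} [Fintype ι] [DecidableEq ι] [Field K] [Group G]

theorem exists_character_of_forall_eval_inv_mulVec_eq_mul {F : MvPolynomial ι K}
    (ρ : G →* GL ι K)
    (h : ∀ g, ∃ c : K, c ≠ 0 ∧ ∀ x : ι → K,
      eval ((((ρ g)⁻¹ : GL ι K) : Matrix ι ι K) *ᵥ x) F = c * eval x F) :
    ∃ χ : G →* Kˣ, ∀ g x,
      eval ((((ρ g)⁻¹ : GL ι K) : Matrix ι ι K) *ᵥ x) F = χ g * eval x F := by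
  by_cases hF : ∀ x, eval x F = 0
  · exact ⟨1, fun g x => by simp [hF]⟩
  obtain ⟨x₀, hx₀⟩ := not_forall.mp hF
  choose c hc₀ hc using h
  have hc_mul : ∀ g h, c (g * h) = c g * c h := fun g h => by
    apply mul_right_cancel₀ hx₀
    rw [← hc, map_mul, mul_inv_rev, Units.val_mul, ← Matrix.mulVec_mulVec, hc, hc]
    ring
  exact ⟨MonoidHom.mk' (fun g => Units.mk0 (c g) (hc₀ g)) fun g h => Units.ext (hc_mul g h), hc⟩

def scalarTwist (μ : G →* Kˣ) (ρ : G →* GL ι K) : G →* GL ι K where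
  toFun g := μ g • ρ g
  map_one' := by simp
  map_mul' g h := Units.ext <| by
    simp only [map_mul, Units.val_smul, Units.val_mul, smul_mul_smul_comm]

theorem scalarTwist_apply (μ : G →* Kˣ) (ρ : G →* GL ι K) (g : G) :
    scalarTwist μ ρ g = μ g • ρ g := rfl

theorem eval_scalarTwist_inv_mulVec {F : MvPolynomial ι K} {d : ℕ} (hF : F.IsHomogeneous d)
    (μ : G →* Kˣ) (ρ : G →* GL ι K) (g : G) (x : ι → K) :
    eval ((((scalarTwist μ ρ g)⁻¹ : GL ι K) : Matrix ι ι K) *ᵥ x) F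
      = ((μ g)⁻¹ ^ d : Kˣ) * eval ((((ρ g)⁻¹ : GL ι K) : Matrix ι ι K) *ᵥ x) F := by
  rw [scalarTwist_apply, Units.smul_inv, Units.val_smul, Units.smul_def, Matrix.smul_mulVec,
    hF.eval_smul, Units.val_pow_eq_pow_val]

end

theorem stmt_19_general (d N : ℕ)
    (G : Type*) [CommGroup G] [Fintype G]
    (ρ : G →* GL (Fin N) ℂ)
    (F : MvPolynomial (Fin N) ℂ) (hhom : F.IsHomogeneous d)
    (hpres : ∀ g : G, ∃ c : ℂ, c ≠ 0 ∧ ∀ x : Fin N → ℂ,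
      eval (((((ρ g)⁻¹ : GL (Fin N) ℂ)) : Matrix (Fin N) (Fin N) ℂ).mulVec x) F
        = c * eval x F) :
    ∃ (j : G →* GL (Fin N) ℂ) (lam : G →* ℂˣ),
      (∀ g : G, ∃ c : ℂˣ,
        (j g : Matrix (Fin N) (Fin N) ℂ) = (c : ℂ) • (ρ g : Matrix (Fin N) (Fin N) ℂ)) ∧
      (∀ g : G, ∀ x : Fin N → ℂ,
        eval ((((j g)⁻¹ : GL (Fin N) ℂ) : Matrix (Fin N) (Fin N) ℂ).mulVec x) F
          = (lam g : ℂ) * eval x F) ∧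
      (∀ g : G, Nat.Coprime (orderOf g) d → lam g = 1) := by
  obtain ⟨χ, hχ⟩ := exists_character_of_forall_eval_inv_mulVec_eq_mul ρ hpres
  obtain ⟨v, hv⟩ := exists_zpow_eq_one_of_coprime_orderOf G d
  refine ⟨scalarTwist (χ ^ v) ρ, χ ^ (1 - v * d), fun g => ⟨(χ ^ v) g, ?_⟩, fun g x => ?_,
    fun g hg => ?_⟩
  · rw [scalarTwist_apply, Units.val_smul, Units.smul_def]
  · rw [eval_scalarTwist_inv_mulVec hhom, hχ, ← mul_assoc, ← Units.val_mul,
      MonoidHom.zpow_apply, MonoidHom.zpow_apply, ← zpow_neg, ← zpow_natCast, ← zpow_mul,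
      ← zpow_add_one, neg_mul, neg_add_eq_sub]
  · rw [MonoidHom.zpow_apply, ← map_zpow, hv g hg, map_one]

/-- Lemma (lifting): if a finite abelian group `G` acts faithfully and linearly
on `ℙ^{N-1}` preserving a smooth hypersurface `V(F)` of degree `d`, via a given
lifting `ρ : G → GL(N, ℂ)`, then there is a lifting `j` of the same projective
action and a character `λ : G → ℂˣ` with `j(g)(F) = λ(g)·F` for all `g`, and
`λ(g) = 1` whenever `orderOf g` is coprime to `d`. Here `g(F) = F ∘ g⁻¹`. -/
theorem stmt_19 (d N : ℕ) (hd : 3 ≤ d) (hN : 3 ≤ N)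
    (G : Type*) [CommGroup G] [Fintype G]
    (ρ : G →* GL (Fin N) ℂ)
    (F : MvPolynomial (Fin N) ℂ) (hhom : F.IsHomogeneous d)
    (hsmooth : ∀ x : Fin N → ℂ, (∀ i : Fin N, eval x (pderiv i F) = 0) → x = 0)
    (hfaithful : ∀ g : G,
      (∃ c : ℂ, (ρ g : Matrix (Fin N) (Fin N) ℂ) = c • (1 : Matrix (Fin N) (Fin N) ℂ)) →
      g = 1)
    (hpres : ∀ g : G, ∃ c : ℂ, c ≠ 0 ∧ ∀ x : Fin N → ℂ,
      eval (((((ρ g)⁻¹ : GL (Fin N) ℂ)) : Matrix (Fin N) (Fin N) ℂ).mulVec x) F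
        = c * eval x F) :
    ∃ (j : G →* GL (Fin N) ℂ) (lam : G →* ℂˣ),
      (∀ g : G, ∃ c : ℂˣ,
        (j g : Matrix (Fin N) (Fin N) ℂ) = (c : ℂ) • (ρ g : Matrix (Fin N) (Fin N) ℂ)) ∧
      (∀ g : G, ∀ x : Fin N → ℂ,
        eval ((((j g)⁻¹ : GL (Fin N) ℂ) : Matrix (Fin N) (Fin N) ℂ).mulVec x) F
          = (lam g : ℂ) * eval x F) ∧
      (∀ g : G, Nat.Coprime (orderOf g) d → lam g = 1) :=
  stmt_19_general d N G ρ F hhom hpres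
end
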